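/- arXiv:1711.01623 — 3 statements merged into one kernel-verified Lean document; each statement's English description precedes it below -/
import Mathlib

section
/- Fix a real β > 0 and define g : ℝ → ℝ by g(s) = β · √(log₂ log₂ log₂ s) (for s large enough that this is defined). There exists a constant c > 0 and n₀ such that for all n ≥ n₀, iterating g starting from n for ⌊c · log* n⌋ steps yields a value that is still at least 2, where log* n denotes the least number of iterations of log₂ needed to bring n to at most 2. -/
/-- `logStar n` is the least number of iterations of `log₂` needed to bring `n`
down to at most `2`. -/
def logStar : ℕ → ℕ
  | n =>
    if h : n ≤ 2 then 0
    else 1 + logStar (Nat.log 2 n)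
decreasing_by exact Nat.log_lt_self 2 (by omega)

/-!
Measure everything against the tower `tower 0 = 2`, `tower (k+1) = 2 ^ tower k`. Three
applications of `log₂` lower a tower by three levels, and since `t ≤ β · √2 ^ t` for large `t`,
the square root followed by the factor `β` costs at most one more level. So one application of
the map lowers a tower by at most four levels, while `n ≥ tower (logStar n - 1)`. Hence after
`⌊logStar n / 5⌋` steps a level `N` remains, with `N` depending only on `β`.
-/

def tower : ℕ → ℕ
  | 0 => 2
  | k + 1 => 2 ^ tower k

@[simp] lemma tower_zero : tower 0 = 2 := rfl

@[simp] lemma tower_succ (k : ℕ) : tower (k + 1) = 2 ^ tower k := rfl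

lemma tower_strictMono : StrictMono tower :=
  strictMono_nat_of_lt_succ fun _ => Nat.lt_two_pow_self

lemma two_le_tower (k : ℕ) : 2 ≤ tower k :=
  tower_zero ▸ tower_strictMono.monotone k.zero_le

lemma logStar_of_two_lt {n : ℕ} (hn : 2 < n) : logStar n = logStar (Nat.log 2 n) + 1 := by
  rw [logStar, dif_neg hn.not_ge, add_comm]

lemma le_logStar_of_tower_le {k n : ℕ} (h : tower k ≤ n) : k ≤ logStar n := by
  induction k generalizing n with
  | zero => exact Nat.zero_le _
  | succ k ih =>
    have hn : 2 < n := ((two_le_tower k).trans_lt (tower_strictMono k.lt_succ_self)).trans_le h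
    have hlog : tower k ≤ Nat.log 2 n :=
      (Nat.le_log_iff_pow_le one_lt_two (by omega)).mpr h
    rw [logStar_of_two_lt hn]
    exact Nat.succ_le_succ (ih hlog)

lemma two_lt_of_pos_logStar {n : ℕ} (h : 0 < logStar n) : 2 < n := by
  by_contra! hn
  rw [logStar, dif_pos hn] at h
  exact h.false

lemma tower_lt_of_lt_logStar {k n : ℕ} (h : k < logStar n) : tower k < n := by
  have hn : 2 < n := two_lt_of_pos_logStar (k.zero_le.trans_lt h)
  induction k generalizing n with
  | zero => exact hn
  | succ k ih =>
    rw [logStar_of_two_lt hn] at h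
    have hlog : tower k < Nat.log 2 n :=
      ih (by omega) (two_lt_of_pos_logStar (by omega))
    calc tower (k + 1) = 2 ^ tower k := rfl
      _ < 2 ^ (tower k + 1) := Nat.pow_lt_pow_succ one_lt_two
      _ ≤ n := (Nat.le_log_iff_pow_le one_lt_two (by omega)).mp hlog

lemma tower_le_logb_of_tower_succ_le {k : ℕ} {s : ℝ} (h : (tower (k + 1) : ℝ) ≤ s) :
    (tower k : ℝ) ≤ Real.logb 2 s := by
  have hpos : (0 : ℝ) < tower (k + 1) := by exact_mod_cast (two_le_tower _).trans_lt' two_pos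
  calc (tower k : ℝ) = Real.logb 2 (tower (k + 1)) := by
        rw [tower_succ, Nat.cast_pow, Nat.cast_ofNat, Real.logb_pow, Real.logb_self_eq_one one_lt_two,
          mul_one]
    _ ≤ Real.logb 2 s := Real.logb_le_logb_of_le one_lt_two hpos h

lemma eventually_natCast_le_mul_pow {β r : ℝ} (hβ : 0 < β) (hr : 1 < r) :
    ∀ᶠ t : ℕ in Filter.atTop, (t : ℝ) ≤ β * r ^ t := by
  filter_upwards [(isLittleO_coe_const_pow_of_one_lt (R := ℝ) hr).bound hβ] with t ht
  rwa [Real.norm_natCast, Real.norm_of_nonneg (pow_nonneg (by linarith) t)] at ht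

lemma tower_le_mul_sqrt_logb_logb_logb {β s : ℝ} {k : ℕ} (hβ : 0 ≤ β)
    (hk : (tower k : ℝ) ≤ β * √2 ^ tower k) (hs : (tower (k + 4) : ℝ) ≤ s) :
    (tower k : ℝ) ≤ β * √(Real.logb 2 (Real.logb 2 (Real.logb 2 s))) := by
  have hlog : (tower (k + 1) : ℝ) ≤ Real.logb 2 (Real.logb 2 (Real.logb 2 s)) :=
    tower_le_logb_of_tower_succ_le <| tower_le_logb_of_tower_succ_le <|
      tower_le_logb_of_tower_succ_le hs
  have hsqrt : √2 ^ tower k ≤ √(Real.logb 2 (Real.logb 2 (Real.logb 2 s))) := by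
    refine Real.le_sqrt_of_sq_le ?_
    rw [← pow_mul, mul_comm, pow_mul, Real.sq_sqrt zero_le_two]
    exact_mod_cast hlog
  exact hk.trans (mul_le_mul_of_nonneg_left hsqrt hβ)

lemma le_iterate_of_forall_le_apply {α : Type*} [Preorder α] (a : ℕ → α) (g : α → α) (d K : ℕ)
    (h : ∀ k, K ≤ k → ∀ s, a (k + d) ≤ s → a k ≤ g s) (j : ℕ) {k : ℕ} (hk : K ≤ k) {s : α}
    (hs : a (k + d * j) ≤ s) : a k ≤ g^[j] s := by
  induction j generalizing s with
  | zero => exact hs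
  | succ j ih =>
    rw [Function.iterate_succ_apply]
    exact ih (h _ (by omega) s (by rwa [add_assoc, ← Nat.mul_succ]))

theorem stmt_10 (β : ℝ) (hβ : 0 < β) :
    ∃ c : ℝ, 0 < c ∧ ∃ n₀ : ℕ, ∀ n : ℕ, n₀ ≤ n →
      (2 : ℝ) ≤
        (fun s : ℝ => β * Real.sqrt (Real.logb 2 (Real.logb 2 (Real.logb 2 s))))^[
          ⌊c * (logStar n : ℝ)⌋₊] (n : ℝ) := by
  obtain ⟨N, hN⟩ := (eventually_natCast_le_mul_pow hβ Real.one_lt_sqrt_two).exists_forall_of_atTop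
  refine ⟨1 / 5, by norm_num, tower (5 * N + 5), fun n hn => ?_⟩
  have hlogStar : 5 * N + 5 ≤ logStar n := le_logStar_of_tower_le hn
  set m := ⌊1 / 5 * (logStar n : ℝ)⌋₊
  have hm : 5 * m ≤ logStar n := by
    have := Nat.floor_le (a := 1 / 5 * (logStar n : ℝ)) (by positivity)
    exact_mod_cast (by linarith : (5 * m : ℝ) ≤ logStar n)
  have hn' : (tower (N + 4 * m) : ℝ) ≤ n := by
    exact_mod_cast (tower_lt_of_lt_logStar (by omega)).le
  calc (2 : ℝ) ≤ tower N := by exact_mod_cast two_le_tower N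
    _ ≤ _ := le_iterate_of_forall_le_apply (fun k => (tower k : ℝ)) _ 4 N
      (fun k hk s hs => tower_le_mul_sqrt_logb_logb_logb hβ.le
        (hN _ (hk.trans (tower_strictMono.id_le k))) hs) m le_rfl hn'
end

section
/- Let G be a finite simple graph whose vertex set is partitioned into three parts A₁, A₂, A₃ such that every vertex has exactly one neighbor in each of the two parts other than its own (and no neighbors in its own part). Then every cycle in G has length divisible by 3, and each connected component of G is a cycle containing equally many vertices from each of the three parts. -/
/-- A set of vertices `S` is a *cycle* of `G` if the induced subgraph on `S`
is connected and 2-regular. -/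
def IsCycleSet {V : Type*} (G : SimpleGraph V) (S : Set V) : Prop :=
  (G.induce S).Connected ∧ ∀ x : S, {y : S | (G.induce S).Adj x y}.ncard = 2

open SimpleGraph

lemma getVert_eq_support_getElem {V : Type*} {G : SimpleGraph V} {u v : V} (p : G.Walk u v) :
    ∀ (i : ℕ) (h : i < p.support.length), p.getVert i = p.support[i] := by
  induction p with
  | nil => intro i h; simp at h; subst h; simp
  | cons ha p ih =>
      intro i h
      cases i with
      | zero => simp
      | succ k =>
          simp only [Walk.support_cons, List.length_cons] at h
          simp only [Walk.getVert_cons_succ, Walk.support_cons, List.getElem_cons_succ]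
          exact ih k (by omega)

lemma cycle_getVert_tail {V : Type*} {G : SimpleGraph V} {v : V} {c : G.Walk v v}
    {k : ℕ} (hk1 : 1 ≤ k) (hk : k ≤ c.length) :
    c.getVert k = c.support.tail[k - 1]'(by simp [c.length_support]; omega) := by
  rw [List.getElem_tail]
  · rw [getVert_eq_support_getElem c k (by simp [c.length_support]; omega)]
    congr 1
    omega

lemma cycle_getVert_ne {V : Type*} {G : SimpleGraph V} {v : V} {c : G.Walk v v}
    (hc : c.IsCycle) {i : ℕ} (h : i + 2 ≤ c.length) :
    c.getVert i ≠ c.getVert (i + 2) := by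
  have hn3 := hc.three_le_length
  have hnd := hc.support_nodup
  rcases Nat.eq_zero_or_pos i with rfl | hi
  · -- getVert 0 = v = getVert length; compare indices 1 and length - 1 in tail
    have h1 : c.getVert 2 = c.support.tail[1]'(by simp [c.length_support]; omega) :=
      cycle_getVert_tail (by omega) (by omega)
    have h2 : c.getVert c.length = c.support.tail[c.length - 1]'(by simp [c.length_support]; omega) :=
      cycle_getVert_tail (by omega) (by omega)
    intro he
    have he2 : c.getVert c.length = c.getVert 2 := by
      rw [c.getVert_length]; simpa using he
    rw [h1, h2] at he2
    have := hnd.getElem_inj_iff.mp he2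
    omega
  · have h1 : c.getVert i = c.support.tail[i - 1]'(by simp [c.length_support]; omega) :=
      cycle_getVert_tail (by omega) (by omega)
    have h2 : c.getVert (i+2) = c.support.tail[i + 1]'(by simp [c.length_support]; omega) :=
      cycle_getVert_tail (by omega) (by omega)
    intro he
    rw [h1, h2] at he
    have := hnd.getElem_inj_iff.mp he
    omega

section helpers
variable {V : Type*} {G : SimpleGraph V} {part : V → Fin 3}

/-- Two distinct neighbors of a vertex lie in different parts. -/
lemma nbrs_parts_ne
    (hone : ∀ v : V, ∀ j : Fin 3, j ≠ part v → ∃! w : V, G.Adj v w ∧ part w = j)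
    (hown : ∀ v w : V, G.Adj v w → part v ≠ part w)
    {u w1 w2 : V} (h1 : G.Adj u w1) (h2 : G.Adj u w2) (hne : w1 ≠ w2) :
    part w1 ≠ part w2 := by
  intro he
  obtain ⟨w, -, huniq⟩ := hone u (part w1) (Ne.symm (hown u w1 h1))
  exact hne ((huniq w1 ⟨h1, rfl⟩).trans (huniq w2 ⟨h2, he.symm⟩).symm)
end helpers

theorem stmt_12 {V : Type*} [Fintype V] (G : SimpleGraph V)
    (part : V → Fin 3)
    -- no neighbors inside one's own part
    (hown : ∀ v w : V, G.Adj v w → part v ≠ part w)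
    -- exactly one neighbor in each of the two other parts
    (hone : ∀ v : V, ∀ j : Fin 3, j ≠ part v → ∃! w : V, G.Adj v w ∧ part w = j) :
    -- every cycle has length divisible by 3
    (∀ (v : V) (c : G.Walk v v), c.IsCycle → 3 ∣ c.length) ∧
    -- every connected component is a cycle with equally many vertices in each part
    (∀ c : G.ConnectedComponent, IsCycleSet G c.supp ∧
      ∀ i j : Fin 3,
        (c.supp ∩ {v : V | part v = i}).ncard = (c.supp ∩ {v : V | part v = j}).ncard) := by
  classical
  -- the map to ZMod 3
  set q : V → ZMod 3 := fun v => ((part v : ℕ) : ZMod 3) with hqdef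
  have hq : ∀ x y : V, q x = q y ↔ part x = part y := by
    intro x y
    constructor
    · intro h
      have hx := ZMod.val_cast_of_lt (show (part x : ℕ) < 3 from (part x).isLt)
      have hy := ZMod.val_cast_of_lt (show (part y : ℕ) < 3 from (part y).isLt)
      have hv : (↑(part x : ℕ) : ZMod 3).val = (↑(part y : ℕ) : ZMod 3).val := congrArg ZMod.val h
      rw [hx, hy] at hv
      exact Fin.ext hv
    · intro h; simp [hqdef, h]
  -- step lemma
  have hstep : ∀ a b c : V, G.Adj a b → G.Adj b c → a ≠ c →
      q c = q b + (q b - q a) := by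
    intro a b c hab hbc hac
    have h1 : q a ≠ q b := fun h => hown a b hab ((hq a b).mp h)
    have h2 : q b ≠ q c := fun h => hown b c hbc ((hq b c).mp h)
    have h3 : q a ≠ q c := fun h =>
      nbrs_parts_ne hone hown hab.symm hbc hac ((hq a c).mp h)
    revert h1 h2 h3
    generalize q a = x; generalize q b = y; generalize q c = z
    revert x y z; decide
  constructor
  · -- cycles have length divisible by 3
    intro v c hc
    have hn3 := hc.three_le_length
    set n := c.length with hn
    set d : ZMod 3 := q (c.getVert 1) - q v with hd
    have key : ∀ i, i ≤ n → q (c.getVert i) = q v + (i : ZMod 3) * d := by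
      intro i
      induction i using Nat.strong_induction_on with
      | _ i ih =>
        match i with
        | 0 => intro _; simp
        | 1 => intro _; simp [hd]
        | (k+2) =>
          intro h2
          have e1 := ih k (by omega) (by omega)
          have e2 := ih (k+1) (by omega) (by omega)
          have hadj1 : G.Adj (c.getVert k) (c.getVert (k+1)) :=
            c.adj_getVert_succ (by omega)
          have hadj2 : G.Adj (c.getVert (k+1)) (c.getVert (k+2)) :=
            c.adj_getVert_succ (by omega)
          have hne := cycle_getVert_ne hc (show k + 2 ≤ c.length by omega)
          have := hstep _ _ _ hadj1 hadj2 hne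
          rw [this, e1, e2]
          push_cast
          ring
    have hend := key n le_rfl
    rw [show c.getVert n = v from c.getVert_length] at hend
    have hnd0 : (n : ZMod 3) * d = 0 := by linear_combination - hend
    have hdne : d ≠ 0 := by
      have hadj : G.Adj v (c.getVert 1) := by
        have := c.adj_getVert_succ (show 0 < c.length by omega)
        simpa using this
      have : q v ≠ q (c.getVert 1) := fun h => hown _ _ hadj ((hq _ _).mp h)
      simp [hd, sub_eq_zero]
      exact fun h => this h.symm
    have hzero : (n : ZMod 3) = 0 := by
      have : ∀ m e : ZMod 3, e ≠ 0 → m * e = 0 → m = 0 := by decide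
      exact this _ _ hdne hnd0
    exact (ZMod.natCast_eq_zero_iff n 3).mp hzero
  · -- components are cycles with balanced parts
    have hne1 : ∀ x : Fin 3, x + 1 ≠ x := by decide
    have hne2 : ∀ x : Fin 3, x + 2 ≠ x := by decide
    have hone' : ∀ v : V, ∀ j : Fin 3, j ≠ part v →
        ∃ w, (G.Adj v w ∧ part w = j) ∧ ∀ y, (G.Adj v y ∧ part y = j) → y = w :=
      fun v j h => hone v j h
    choose nbr hnbr huniq using hone'
    set σ : V → V := fun v => nbr v (part v + 1) (hne1 _) with hσdef
    set τ : V → V := fun v => nbr v (part v + 2) (hne2 _) with hτdef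
    have hσadj : ∀ v, G.Adj v (σ v) := fun v => (hnbr v _ _).1
    have hσpart : ∀ v, part (σ v) = part v + 1 := fun v => (hnbr v _ _).2
    have hτadj : ∀ v, G.Adj v (τ v) := fun v => (hnbr v _ _).1
    have hτpart : ∀ v, part (τ v) = part v + 2 := fun v => (hnbr v _ _).2
    have hτσ : ∀ v, τ (σ v) = v := by
      intro v
      exact (huniq (σ v) (part (σ v) + 2) (hne2 _) v
        ⟨(hσadj v).symm, by rw [hσpart v]; exact (by decide : ∀ x : Fin 3, x = x + 1 + 2) _⟩).symm
    have hστ : ∀ v, σ (τ v) = v := by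
      intro v
      exact (huniq (τ v) (part (τ v) + 1) (hne1 _) v
        ⟨(hτadj v).symm, by rw [hτpart v]; exact (by decide : ∀ x : Fin 3, x = x + 2 + 1) _⟩).symm
    have hnbr_eq : ∀ v w, G.Adj v w → w = σ v ∨ w = τ v := by
      intro v w h
      have hp := hown v w h
      have h12 : part w = part v + 1 ∨ part w = part v + 2 := by
        revert hp
        generalize part v = x; generalize part w = y
        revert x y; decide
      rcases h12 with h1 | h1
      · exact Or.inl (huniq v (part v + 1) (hne1 _) w ⟨h, h1⟩)
      · exact Or.inr (huniq v (part v + 2) (hne2 _) w ⟨h, h1⟩)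
    have hστne : ∀ v, σ v ≠ τ v := by
      intro v he
      have h1 := hσpart v
      rw [he, hτpart v] at h1
      exact (by decide : ∀ x : Fin 3, x + 2 ≠ x + 1) _ h1
    have hsupp : ∀ (c : G.ConnectedComponent) (v w : V),
        v ∈ c.supp → G.Adj v w → w ∈ c.supp := by
      intro c v w hv h
      rw [ConnectedComponent.mem_supp_iff] at hv ⊢
      rw [← hv]
      exact ConnectedComponent.sound h.symm.reachable
    intro c
    refine ⟨⟨?_, ?_⟩, ?_⟩
    · -- connectedness of the induced graph on the component
      rw [connected_induce_iff, Subgraph.connected_iff_forall_exists_walk_subgraph]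
      obtain ⟨v, hv⟩ := c.exists_rep
      have hsupport : ∀ (u w : V) (p : G.Walk u w), u ∈ c.supp →
          ∀ x ∈ p.support, x ∈ c.supp := by
        intro u w p hu x hx
        rw [ConnectedComponent.mem_supp_iff] at hu ⊢
        rw [← hu]
        have hr : G.Reachable u x := ⟨p.takeUntil x hx⟩
        exact ConnectedComponent.sound hr.symm
      constructor
      · refine ⟨v, ?_⟩
        simp only [Subgraph.induce_verts]
        exact (ConnectedComponent.mem_supp_iff c v).mpr hv
      · intro u w hu hw
        simp only [Subgraph.induce_verts] at hu hw
        have hr : G.Reachable u w := by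
          rw [ConnectedComponent.mem_supp_iff] at hu hw
          exact ConnectedComponent.exact (hu.trans hw.symm)
        obtain ⟨p⟩ := hr
        refine ⟨p, ?_, ?_⟩
        · intro x hx
          rw [p.mem_verts_toSubgraph] at hx
          exact hsupport u w p hu x hx
        · intro x y hxy
          have hxs : x ∈ c.supp := hsupport u w p hu x (p.mem_verts_toSubgraph.mp hxy.fst_mem)
          have hys : y ∈ c.supp := hsupport u w p hu y (p.mem_verts_toSubgraph.mp hxy.snd_mem)
          simp only [Subgraph.induce_adj, Subgraph.top_adj]
          exact ⟨hxs, hys, hxy.adj_sub⟩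
    · -- 2-regular
      intro x
      have hx : (x : V) ∈ c.supp := x.2
      have hσs : σ x ∈ c.supp := hsupp c _ _ hx (hσadj _)
      have hτs : τ x ∈ c.supp := hsupp c _ _ hx (hτadj _)
      have hset : {y : c.supp | (G.induce c.supp).Adj x y} =
          {(⟨σ x, hσs⟩ : c.supp), ⟨τ x, hτs⟩} := by
        ext y
        simp only [Set.mem_setOf_eq, comap_adj, Function.Embedding.coe_subtype,
          Set.mem_insert_iff, Set.mem_singleton_iff]
        constructor
        · intro h
          rcases hnbr_eq _ _ h with h1 | h1
          · exact Or.inl (Subtype.ext h1)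
          · exact Or.inr (Subtype.ext h1)
        · rintro (rfl | rfl)
          · exact hσadj _
          · exact hτadj _
      rw [hset, Set.ncard_pair]
      intro h
      exact hστne x (congrArg Subtype.val h)
    · -- balanced parts
      set f : Fin 3 → ℕ := fun i => (c.supp ∩ {v : V | part v = i}).ncard with hfdef
      have hbij : ∀ i : Fin 3, f i = f (i + 1) := by
        intro i
        have hb : Set.BijOn σ (c.supp ∩ {v : V | part v = i})
            (c.supp ∩ {v : V | part v = i + 1}) := by
          refine ⟨?_, ?_, ?_⟩
          · rintro v ⟨hv, hvp⟩
            refine ⟨hsupp c _ _ hv (hσadj _), ?_⟩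
            simp only [Set.mem_setOf_eq] at hvp ⊢
            rw [hσpart v, hvp]
          · intro a _ b _ hab
            have h2 : τ (σ a) = τ (σ b) := by rw [hab]
            rwa [hτσ, hτσ] at h2
          · rintro w ⟨hw, hwp⟩
            refine ⟨τ w, ⟨hsupp c _ _ hw (hτadj _), ?_⟩, hστ w⟩
            simp only [Set.mem_setOf_eq] at hwp ⊢
            rw [hτpart w, hwp]
            exact (by decide : ∀ x : Fin 3, x + 1 + 2 = x) _
        show (c.supp ∩ {v : V | part v = i}).ncard = (c.supp ∩ {v : V | part v = i + 1}).ncard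
        rw [← hb.image_eq, Set.ncard_image_of_injOn hb.injOn]
      have hall : ∀ k : Fin 3, f k = f 0 := by
        intro k
        fin_cases k
        · rfl
        · exact (hbij 0).symm
        · exact ((hbij 0).trans (hbij 1)).symm
      intro i j
      show f i = f j
      rw [hall i, hall j]
end

section
/- Let V be a finite set of n ≥ 3 elements, fix u ∈ V, let k ≥ 1, and suppose that for each v ∈ V \ {u} there is a function f_v from k-element subsets of V \ {u, v} to a message set M. If |M| < ((n−2)/(2k))^k, then there exist distinct nodes v*, w* ∈ V \ {u} and k-element subsets S ≠ S' of V \ {u, v*} with w* ∈ S, w* ∉ S', f_{v*}(S) = f_{v*}(S'), and moreover there exist k-element subsets T ≠ T' of V \ {u, w*} with v* ∈ T, v* ∉ T', and f_{w*}(T) = f_{w*}(T'). -/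
/-!
Call `w` fooling for `v` if `f v` collides on two `k`-sets, one containing `w` and one not. Since
`f v` is injective on the `k`-subsets of its non-fooling elements and `|M| < (m/k)^k ≤ C(m,k)` for
`m ≥ (n-2)/2`, fewer than `(n-2)/2` elements are non-fooling, so every `v ≠ u` has at least
`(n-2)/2` fooling elements. Double counting the fooling relation on `V \ {u}` gives a `w` that is
fooling for at least `(n-2)/2` vertices `v`; a collision of `f w` on `k`-subsets of those vertices
separates one of them, `v`, which is the required pair `(v, w)`.
-/

open Finset

open scoped Nat in
theorem Nat.pow_mul_factorial_le_pow_mul_descFactorial {n k : ℕ} (h : k ≤ n) :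
    n ^ k * k ! ≤ k ^ k * n.descFactorial k := by
  have hpow (m : ℕ) : m ^ k = ∏ _ ∈ range k, m := by simp
  rw [← Nat.descFactorial_self, Nat.descFactorial_eq_prod_range, Nat.descFactorial_eq_prod_range,
    hpow, hpow, ← prod_mul_distrib, ← prod_mul_distrib]
  refine prod_le_prod' fun i _ => ?_
  rw [Nat.mul_sub, Nat.mul_sub, Nat.mul_comm n k]
  exact Nat.sub_le_sub_left (Nat.mul_le_mul_right i h) _

theorem Nat.div_pow_le_choose {α : Type*} [Semifield α] [LinearOrder α] [IsStrictOrderedRing α]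
    {n k : ℕ} (h : k ≤ n) : ((n : α) / k) ^ k ≤ n.choose k := by
  rcases k.eq_zero_or_pos with rfl | hk
  · simp
  have key : n ^ k * k.factorial ≤ n.choose k * k ^ k * k.factorial :=
    (Nat.pow_mul_factorial_le_pow_mul_descFactorial h).trans_eq
      (by rw [Nat.descFactorial_eq_factorial_mul_choose]; ring)
  rw [div_pow, div_le_iff₀ (by positivity)]
  exact_mod_cast Nat.le_of_mul_le_mul_right key k.factorial_pos

theorem Nat.lt_choose_of_lt_div_pow {c k m : ℕ} {x : ℝ} (hc : 0 < c) (hx : 0 ≤ x)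
    (hcx : c < (x / k) ^ k) (hxm : x ≤ m) : c < m.choose k := by
  have hk : k ≠ 0 := by
    rintro rfl
    simp at hcx
    omega
  have hkx : (k : ℝ) ≤ x := by
    have h1 : 1 < x / k :=
      (one_lt_pow_iff_of_nonneg (by positivity) hk).mp ((Nat.one_le_cast.mpr hc).trans_lt hcx)
    exact ((one_lt_div (by positivity)).mp h1).le
  have hkm : k ≤ m := by exact_mod_cast hkx.trans hxm
  have hxm' : x / k ≤ m / k := by gcongr
  exact_mod_cast hcx.trans_le <|
    (pow_le_pow_left₀ (by positivity) hxm' k).trans (Nat.div_pow_le_choose hkm)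

section Fooling

variable {α M : Type*} (g : Finset α → M) (N : Finset α) (k : ℕ)

def IsFooling (w : α) : Prop :=
  ∃ S ∈ N.powersetCard k, ∃ S' ∈ N.powersetCard k, w ∈ S ∧ w ∉ S' ∧ g S = g S'

variable {g N k}

theorem IsFooling.mem {w : α} (h : IsFooling g N k w) : w ∈ N := by
  obtain ⟨S, hS, -, -, hw, -⟩ := h
  exact (mem_powersetCard.mp hS).1 hw

theorem IsFooling.mono {A : Finset α} {w : α} (h : IsFooling g A k w) (hAN : A ⊆ N) :
    IsFooling g N k w := by
  obtain ⟨S, hS, S', hS', hw⟩ := h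
  exact ⟨S, powersetCard_mono hAN hS, S', powersetCard_mono hAN hS', hw⟩

theorem IsFooling.exists_ne {w : α} (h : IsFooling g N k w) :
    ∃ S S' : Finset α, S ≠ S' ∧ S.card = k ∧ S'.card = k ∧ (↑S ⊆ (↑N : Set α)) ∧
      (↑S' ⊆ (↑N : Set α)) ∧ w ∈ S ∧ w ∉ S' ∧ g S = g S' := by
  obtain ⟨S, hS, S', hS', hw, hw', heq⟩ := h
  rw [mem_powersetCard, ← coe_subset] at hS hS'
  exact ⟨S, S', fun h => hw' (h ▸ hw), hS.2, hS'.2, hS.1, hS'.1, hw, hw', heq⟩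

theorem exists_isFooling_of_card_lt_choose [Fintype M] (h : Fintype.card M < N.card.choose k) :
    ∃ w, IsFooling g N k w := by
  rw [← card_powersetCard, ← card_univ] at h
  obtain ⟨S, hS, S', hS', hne, heq⟩ :=
    exists_ne_map_eq_of_card_lt_of_maps_to h fun S _ => mem_univ (g S)
  have hcard := (mem_powersetCard.mp hS).2.trans (mem_powersetCard.mp hS').2.symm
  obtain ⟨w, hw, hw'⟩ := not_subset.mp fun hsub => hne (eq_of_subset_of_card_le hsub hcard.ge)
  exact ⟨w, S, hS, S', hS', hw, hw', heq⟩

theorem card_sub_lt_card_filter_isFooling [Fintype M] [DecidablePred (IsFooling g N k)] {c : ℝ}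
    (hc : ∀ m : ℕ, c ≤ m → Fintype.card M < m.choose k) :
    (N.card : ℝ) - c < (N.filter (IsFooling g N k)).card := by
  set A := N.filter (fun w => ¬ IsFooling g N k w)
  -- `g` is injective on the `k`-subsets of `A`, which are therefore at most `|M|` many.
  have hA : (A.card : ℝ) < c := by
    by_contra! hcA
    obtain ⟨w, hw⟩ := exists_isFooling_of_card_lt_choose (g := g) (hc _ hcA)
    exact (mem_filter.mp hw.mem).2 (hw.mono (filter_subset _ N))
  have hsplit : ((N.filter (IsFooling g N k)).card : ℝ) + A.card = N.card := by
    exact_mod_cast card_filter_add_card_filter_not (IsFooling g N k)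
  linarith

end Fooling

theorem Finset.exists_le_card_bipartiteBelow {α : Type*} {s : Finset α} (hs : s.Nonempty)
    (r : α → α → Prop) [DecidableRel r] {c : ℝ}
    (h : ∀ a ∈ s, c ≤ (s.bipartiteAbove r a).card) :
    ∃ b ∈ s, c ≤ (s.bipartiteBelow r b).card := by
  refine exists_le_of_sum_le hs ((sum_le_sum h).trans_eq ?_)
  exact_mod_cast sum_card_bipartiteAbove_eq_sum_card_bipartiteBelow r

section FoolingFor

variable {V M : Type*} [Fintype V] [DecidableEq V] (f : V → Finset V → M) (u : V) (k : ℕ)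

-- `IsFoolingFor f u k v w` says that `w` is `(v,u)`-fooling in the paper's terminology.
def IsFoolingFor (v w : V) : Prop :=
  IsFooling (f v) (univ \ {u, v}) k w

variable {f u k}

theorem IsFoolingFor.ne {v w : V} (h : IsFoolingFor f u k v w) : w ≠ u ∧ w ≠ v := by
  simpa using IsFooling.mem h

theorem bipartiteBelow_isFoolingFor_subset [DecidableRel (IsFoolingFor f u k)] (w : V) :
    (univ.erase u).bipartiteBelow (IsFoolingFor f u k) w ⊆ univ \ {u, w} := by
  intro v hv
  obtain ⟨hvu, hvw⟩ := mem_bipartiteBelow _ |>.mp hv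
  simpa [ne_of_mem_erase hvu] using hvw.ne.2.symm

theorem card_sub_lt_card_bipartiteAbove_isFoolingFor [Fintype M]
    [DecidableRel (IsFoolingFor f u k)] {c : ℝ}
    (hc : ∀ m : ℕ, c ≤ m → Fintype.card M < m.choose k) {v : V} (hv : v ≠ u) :
    (Fintype.card V : ℝ) - 2 - c <
      ((univ.erase u).bipartiteAbove (IsFoolingFor f u k) v).card := by
  classical
  have hpair : ({u, v} : Finset V).card = 2 := card_pair hv.symm
  have hN : ((univ \ {u, v} : Finset V).card : ℝ) = Fintype.card V - 2 := by
    rw [card_univ_sdiff, hpair, Nat.cast_sub (hpair ▸ card_le_univ _)]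
    norm_num
  have hsub : (univ \ {u, v}).filter (IsFooling (f v) (univ \ {u, v}) k) ⊆
      (univ.erase u).bipartiteAbove (IsFoolingFor f u k) v := fun w hw =>
    have hfw : IsFoolingFor f u k v w := (mem_filter.mp hw).2
    mem_bipartiteAbove _ |>.mpr ⟨mem_erase.mpr ⟨hfw.ne.1, mem_univ w⟩, hfw⟩
  calc (Fintype.card V : ℝ) - 2 - c = (univ \ {u, v} : Finset V).card - c := by rw [hN]
    _ < ((univ \ {u, v}).filter (IsFooling (f v) (univ \ {u, v}) k)).card :=
      card_sub_lt_card_filter_isFooling hc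
    _ ≤ ((univ.erase u).bipartiteAbove (IsFoolingFor f u k) v).card := by
      exact_mod_cast card_le_card hsub

end FoolingFor

theorem stmt_14_general {V M : Type*} [Fintype V] [Fintype M]
    (n : ℕ) (hn : Fintype.card V = n) (hn3 : 3 ≤ n) (u : V) (k : ℕ)
    (f : V → Finset V → M)
    (hM : (Fintype.card M : ℝ) < (((n : ℝ) - 2) / (2 * (k : ℝ))) ^ k) :
    ∃ v w : V, v ≠ w ∧ v ≠ u ∧ w ≠ u ∧
      (∃ S S' : Finset V, S ≠ S' ∧ S.card = k ∧ S'.card = k ∧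
        (↑S ⊆ (Set.univ \ {u, v} : Set V)) ∧ (↑S' ⊆ (Set.univ \ {u, v} : Set V)) ∧
        w ∈ S ∧ w ∉ S' ∧ f v S = f v S') ∧
      (∃ T T' : Finset V, T ≠ T' ∧ T.card = k ∧ T'.card = k ∧
        (↑T ⊆ (Set.univ \ {u, w} : Set V)) ∧ (↑T' ⊆ (Set.univ \ {u, w} : Set V)) ∧
        v ∈ T ∧ v ∉ T' ∧ f w T = f w T') := by
  classical
  have hn3' : (3 : ℝ) ≤ n := by exact_mod_cast hn3
  have hbig (m : ℕ) (hm : ((n : ℝ) - 2) / 2 ≤ m) : Fintype.card M < m.choose k :=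
    Nat.lt_choose_of_lt_div_pow (Fintype.card_pos_iff.mpr ⟨f u ∅⟩) (by linarith)
      (by rwa [div_div]) hm
  have hfool (v : V) (hv : v ∈ univ.erase u) :
      ((n : ℝ) - 2) / 2 ≤ ((univ.erase u).bipartiteAbove (IsFoolingFor f u k) v).card := by
    have := card_sub_lt_card_bipartiteAbove_isFoolingFor (f := f) hbig (ne_of_mem_erase hv)
    rw [hn] at this
    linarith
  obtain ⟨v₀, hv₀⟩ := Fintype.exists_ne_of_one_lt_card (by omega) u
  obtain ⟨w, hwu, hw⟩ :=
    exists_le_card_bipartiteBelow ⟨v₀, mem_erase.mpr ⟨hv₀, mem_univ _⟩⟩ _ hfool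
  obtain ⟨v, hv⟩ := exists_isFooling_of_card_lt_choose (hbig _ hw)
  obtain ⟨hvu, hvw⟩ := mem_bipartiteBelow _ |>.mp hv.mem
  have hset (a : V) : ((univ \ {u, a} : Finset V) : Set V) = Set.univ \ {u, a} := by simp
  exact ⟨v, w, hvw.ne.2.symm, ne_of_mem_erase hvu, ne_of_mem_erase hwu, hset v ▸ hvw.exists_ne,
    hset w ▸ (hv.mono (bipartiteBelow_isFoolingFor_subset w)).exists_ne⟩

theorem stmt_14 {V M : Type*} [Fintype V] [DecidableEq V] [Fintype M]
    (n : ℕ) (hn : Fintype.card V = n) (hn3 : 3 ≤ n) (u : V) (k : ℕ) (hk : 1 ≤ k)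
    (f : V → Finset V → M)
    (hM : (Fintype.card M : ℝ) < (((n : ℝ) - 2) / (2 * (k : ℝ))) ^ k) :
    ∃ v w : V, v ≠ w ∧ v ≠ u ∧ w ≠ u ∧
      (∃ S S' : Finset V, S ≠ S' ∧ S.card = k ∧ S'.card = k ∧
        (↑S ⊆ (Set.univ \ {u, v} : Set V)) ∧ (↑S' ⊆ (Set.univ \ {u, v} : Set V)) ∧
        w ∈ S ∧ w ∉ S' ∧ f v S = f v S') ∧
      (∃ T T' : Finset V, T ≠ T' ∧ T.card = k ∧ T'.card = k ∧
        (↑T ⊆ (Set.univ \ {u, w} : Set V)) ∧ (↑T' ⊆ (Set.univ \ {u, w} : Set V)) ∧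
        v ∈ T ∧ v ∉ T' ∧ f w T = f w T') :=
  stmt_14_general n hn hn3 u k f hM
end
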